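/- arXiv:2509.15294 — 2 statements merged into one kernel-verified Lean document; each statement's English description precedes it below -/
import Mathlib

section
/- For any double-occurrence word x ∈ Γ_n and ICC colouring z ∈ {r,b}^n, ξ_n(E_n(x,z)) = n - 1/2 + (1/2)·#dl(x) + (1/2)·W_tot(G_x) - wt_{G_x}(z), where #dl(x) is the number of indices i with x_i = x_{i+1} and W_tot(G_x) is the total weight of the BPSP graph. -/
/-- `x` is a double-occurrence word of length `2n` over the alphabet `Fin n`:
every symbol occurs exactly twice among positions `0, …, 2n-1`. -/
def DoubleOcc (n : ℕ) (x : ℕ → Fin n) : Prop :=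
  ∀ t : Fin n, ((Finset.range (2*n)).filter (fun j => x j = t)).card = 2

/-- The eta function: `[xᵢ₊₁ ∈ {x₀,…,xᵢ}] XOR [xᵢ ∈ {x₀,…,xᵢ₋₁}]` (0-indexed). -/
def eta (n : ℕ) (x : ℕ → Fin n) (i : ℕ) : ℕ :=
  (if x (i+1) ∈ (Finset.range (i+1)).image x then 1 else 0) ^^^
  (if x i ∈ (Finset.range i).image x then 1 else 0)

/-- The ICC expansion map. Colours: `true` = r, `false` = b. -/
def expandB {n : ℕ} (x : ℕ → Fin n) (z : Fin n → Bool) (i : ℕ) : Bool :=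
  if x i ∈ (Finset.range i).image x then !(z (x i)) else z (x i)

/-- BPSP cost: number of adjacent colour changes. -/
def xiCost (n : ℕ) (f : ℕ → Bool) : ℕ :=
  ∑ i ∈ Finset.range (2*n - 1), if f i = f (i+1) then 0 else 1

/-- The number of double letters of `x`. -/
def dlCount (n : ℕ) (x : ℕ → Fin n) : ℕ :=
  ((Finset.range (2*n - 1)).filter (fun i => x i = x (i+1))).card

/-- Total weight of the BPSP graph `G_x`. -/
def wTot {n : ℕ} (x : ℕ → Fin n) : ℤ :=
  -(dlCount n x : ℤ) - ∑ k ∈ Finset.range (2*n - 1), (-1 : ℤ)^(eta n x k)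

/-- Weight of the cut `z` in the BPSP graph `G_x`. -/
def cutW {n : ℕ} (x : ℕ → Fin n) (z : Fin n → Bool) : ℤ :=
  -∑ k ∈ Finset.range (2*n - 1),
      (-1 : ℤ)^(eta n x k) * (if z (x k) = z (x (k+1)) then 0 else 1)

/-! The identity holds pair by pair. The colour `expandB x z k` is `z (x k)`, flipped iff the letter
`x k` occurred before, so two adjacent colours differ iff `z (x k) ≠ z (x (k+1))` XOR `eta n x k`,
and `[u ≠ v XOR e] = (1 - (-1)^e)/2 + (-1)^e [u ≠ v]`. Summing over the `2n - 1` adjacent pairs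
gives the formula; the `dlCount` terms cancel against the ones inside `wTot`. -/

open Finset

lemma indicator_xor_ne_xor {K : Type*} [Field K] [CharZero K] (p q a b : Bool) :
    (if (p ^^ a) = (q ^^ b) then 0 else 1 : K)
      = 1/2 - 1/2 * (-1) ^ (b.toNat ^^^ a.toNat)
        + (-1) ^ (b.toNat ^^^ a.toNat) * (if p = q then 0 else 1) := by
  cases p <;> cases q <;> cases a <;> cases b <;> norm_num

lemma expandB_eq_xor {n : ℕ} (x : ℕ → Fin n) (z : Fin n → Bool) (i : ℕ) :
    expandB x z i = (z (x i) ^^ decide (x i ∈ (range i).image x)) := by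
  by_cases h : x i ∈ (range i).image x <;> simp [expandB, h]

lemma eta_eq_toNat_xor (n : ℕ) (x : ℕ → Fin n) (i : ℕ) :
    eta n x i = (decide (x (i+1) ∈ (range (i+1)).image x)).toNat
      ^^^ (decide (x i ∈ (range i).image x)).toNat := by
  simp only [eta, Bool.toNat, Bool.cond_decide]

lemma xiCost_expandB {n : ℕ} (x : ℕ → Fin n) (z : Fin n → Bool) :
    (xiCost n (expandB x z) : ℚ)
      = ∑ k ∈ range (2*n - 1), (1/2 - 1/2 * (-1 : ℚ) ^ eta n x k
          + (-1 : ℚ) ^ eta n x k * (if z (x k) = z (x (k+1)) then 0 else 1)) := by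
  rw [xiCost, Nat.cast_sum]
  refine sum_congr rfl fun k _ => ?_
  rw [expandB_eq_xor, expandB_eq_xor, eta_eq_toNat_xor, ← indicator_xor_ne_xor]
  push_cast
  rfl

theorem icc_cost_graph_general {n : ℕ} (x : ℕ → Fin n) (z : Fin n → Bool) :
    (xiCost n (expandB x z) : ℚ)
      = n - 1/2 + (dlCount n x : ℚ)/2 + (wTot x : ℚ)/2 - (cutW x z : ℚ) := by
  have hn : 1 ≤ n := Fin.pos (x 0)
  rw [xiCost_expandB, sum_add_distrib, sum_sub_distrib, sum_const, card_range, ← mul_sum,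
    nsmul_eq_mul, Nat.cast_sub (by omega : 1 ≤ 2*n)]
  simp only [wTot, cutW]
  push_cast [apply_ite (Int.cast : ℤ → ℚ)]
  ring

theorem icc_cost_graph {n : ℕ} (x : ℕ → Fin n) (hx : DoubleOcc n x) (z : Fin n → Bool) :
    (xiCost n (expandB x z) : ℚ)
      = n - 1/2 + (dlCount n x : ℚ)/2 + (wTot x : ℚ)/2 - (cutW x z : ℚ) :=
  icc_cost_graph_general x z
end

section
/- For any double-occurrence word x ∈ Γ_n and spin assignment z ∈ {-1,1}^n, ξ_n(E_n(x,z)) = n - 1/2 + (1/2)·#dl(x) - (1/2)·Σ_{i: x_i ≠ x_{i+1}} (-1)^{η(x,i)} z_{x_i} z_{x_{i+1}}, where the sum ranges over i ∈ [2n-1] with x_i ≠ x_{i+1} and #dl(x) = |{i ∈ [2n-1] : x_i = x_{i+1}}|. -/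
/-- The ICC expansion map for spin colourings (`1 ≡ r`, `-1 ≡ b`, `¬` is negation). -/
def expandZ {n : ℕ} (x : ℕ → Fin n) (z : Fin n → ℤ) (i : ℕ) : ℤ :=
  if x i ∈ (Finset.range i).image x then -(z (x i)) else z (x i)

/-- BPSP cost for spin-valued colourings: number of adjacent colour changes. -/
def xiCostZ (n : ℕ) (f : ℕ → ℤ) : ℕ :=
  ∑ i ∈ Finset.range (2*n - 1), if f i = f (i+1) then 0 else 1

open Finset

lemma not_mem_image_range_of_eq_succ {n : ℕ} {x : ℕ → Fin n} (hx : DoubleOcc n x) {i : ℕ}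
    (hi : i + 1 < 2 * n) (h : x i = x (i + 1)) : x i ∉ (range i).image x := by
  intro hmem
  obtain ⟨j, hj, hxj⟩ := mem_image.mp hmem
  have hj := mem_range.mp hj
  have hsub : ({j, i, i + 1} : Finset ℕ) ⊆ (range (2 * n)).filter (fun k => x k = x i) := by
    intro k hk
    simp only [mem_insert, mem_singleton] at hk
    rcases hk with rfl | rfl | rfl <;> simp only [mem_filter, mem_range] <;>
      exact ⟨by omega, by simp [hxj, h]⟩
  have hthree : ({j, i, i + 1} : Finset ℕ).card = 3 := by
    rw [card_insert_of_notMem (by simp; omega), card_pair (by omega)]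
  have := card_le_card hsub
  rw [hthree, hx (x i)] at this
  omega

lemma expandZ_ne_expandZ_succ_of_eq {n : ℕ} {x : ℕ → Fin n} (hx : DoubleOcc n x)
    {z : Fin n → ℤ} {i : ℕ} (hi : i + 1 < 2 * n) (h : x i = x (i + 1)) (hz : z (x i) ≠ 0) :
    expandZ x z i ≠ expandZ x z (i + 1) := by
  have hfirst : expandZ x z i = z (x i) := if_neg (not_mem_image_range_of_eq_succ hx hi h)
  have hsecond : expandZ x z (i + 1) = -z (x i) :=
    (if_pos (mem_image.mpr ⟨i, self_mem_range_succ i, h⟩)).trans (by rw [h])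
  rw [hfirst, hsecond]
  omega

lemma expandZ_mul_expandZ_succ {n : ℕ} (x : ℕ → Fin n) (z : Fin n → ℤ) (i : ℕ) :
    expandZ x z i * expandZ x z (i + 1) = (-1) ^ eta n x i * z (x i) * z (x (i + 1)) := by
  unfold expandZ eta
  split_ifs <;> simp

lemma expandZ_eq_one_or_neg_one {n : ℕ} (x : ℕ → Fin n) {z : Fin n → ℤ}
    (hz : ∀ t, z t = 1 ∨ z t = -1) (i : ℕ) : expandZ x z i = 1 ∨ expandZ x z i = -1 := by
  unfold expandZ
  rcases hz (x i) with h | h <;> split_ifs <;> simp [h]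

lemma ite_eq_zero_one_eq_one_sub_mul_div_two {a b : ℤ} (ha : a = 1 ∨ a = -1)
    (hb : b = 1 ∨ b = -1) : (if a = b then (0 : ℚ) else 1) = (1 - a * b) / 2 := by
  rcases ha with rfl | rfl <;> rcases hb with rfl | rfl <;> norm_num

lemma ite_expandZ_eq_zero_one {n : ℕ} {x : ℕ → Fin n} (hx : DoubleOcc n x) {z : Fin n → ℤ}
    (hz : ∀ t, z t = 1 ∨ z t = -1) {i : ℕ} (hi : i + 1 < 2 * n) :
    (if expandZ x z i = expandZ x z (i + 1) then (0 : ℚ) else 1)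
      = if x i = x (i + 1) then 1
        else (1 - (-1 : ℚ) ^ eta n x i * z (x i) * z (x (i + 1))) / 2 := by
  by_cases hdl : x i = x (i + 1)
  · have hz0 : z (x i) ≠ 0 := by rcases hz (x i) with h | h <;> simp [h]
    rw [if_neg (expandZ_ne_expandZ_succ_of_eq hx hi hdl hz0), if_pos hdl]
  · rw [if_neg hdl, ite_eq_zero_one_eq_one_sub_mul_div_two (expandZ_eq_one_or_neg_one x hz i)
      (expandZ_eq_one_or_neg_one x hz (i + 1))]
    exact_mod_cast congrArg (fun m : ℤ => (1 - (m : ℚ)) / 2) (expandZ_mul_expandZ_succ x z i)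

theorem ising_cost_dl {n : ℕ} (x : ℕ → Fin n) (hx : DoubleOcc n x)
    (z : Fin n → ℤ) (hz : ∀ t, z t = 1 ∨ z t = -1) :
    (xiCostZ n (expandZ x z) : ℚ)
      = n - 1/2
        + (((Finset.range (2*n - 1)).filter (fun i => x i = x (i+1))).card : ℚ) / 2
        - (1/2) * ∑ i ∈ (Finset.range (2*n - 1)).filter (fun i => x i ≠ x (i+1)),
            (-1 : ℚ)^(eta n x i) * (z (x i) : ℚ) * (z (x (i+1)) : ℚ) := by
  have hn : 1 ≤ n := Nat.one_le_iff_ne_zero.mpr fun h => (h ▸ x 0).elim0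
  have hcard : ((#{i ∈ range (2 * n - 1) | x i = x (i + 1)} : ℕ) : ℚ)
      + #{i ∈ range (2 * n - 1) | ¬x i = x (i + 1)} = 2 * n - 1 := by
    rw [← Nat.cast_add, card_filter_add_card_filter_not, card_range, Nat.cast_sub (by omega)]
    push_cast
    ring
  simp only [xiCostZ, Nat.cast_sum, Nat.cast_ite, Nat.cast_zero, Nat.cast_one]
  rw [sum_congr rfl fun i hi => ite_expandZ_eq_zero_one hx hz (by simp at hi; omega), sum_ite,
    sum_const, nsmul_one, ← sum_div, sum_sub_distrib, sum_const, nsmul_one]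
  simp only [ne_eq]
  linarith
end
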